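/- Let p ≠ 2, 3 and let G = P ⋊ S₃ be the profinite group constructed from P ⊆ Γ(ℤ_p⟦X₁,…,X₄,Y₁,…,Y₄⟧) as the closed subgroup generated by the S₃-conjugates of X = 1+(Xᵢ) and Y = 1+(Yᵢ), with ρ̄ : G ↠ S₃ → GL₂(𝔽_p) the composition of the projection with the standard representation. Then dim_{𝔽_p} H¹(G, Ad(ρ̄)) = 8. -/

import Mathlib

open Matrix IsLocalRing

instance (p : ℕ) : TopologicalSpace (ZMod p) := ⊥
instance (p : ℕ) : DiscreteTopology (ZMod p) := ⟨rfl⟩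

instance : TopologicalSpace (Equiv.Perm (Fin 3)) := ⊥
instance : DiscreteTopology (Equiv.Perm (Fin 3)) := ⟨rfl⟩

instance (p : ℕ) : DiscreteTopology (Matrix (Fin 2) (Fin 2) (ZMod p)) :=
  inferInstanceAs (DiscreteTopology (Fin 2 → Fin 2 → ZMod p))

/-- The product topology on a semidirect product. -/
instance {N G : Type} [Group N] [Group G] {φ : G →* MulAut N} [TopologicalSpace N]
    [TopologicalSpace G] : TopologicalSpace (N ⋊[φ] G) :=
  TopologicalSpace.induced (fun x => (x.left, x.right)) inferInstance

/-- The adjoint representation attached to a homomorphism `ρ : G → GL₂(k)`: `G` acts on the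
`2×2` matrices `M₂(k)` by conjugation, `g • A = ρ g * A * (ρ g)⁻¹`. -/
def adGL {k G : Type} [CommRing k] [Group G] (ρ : G →* GL (Fin 2) k) :
    Representation k G (Matrix (Fin 2) (Fin 2) k) where
  toFun g :=
    { toFun := fun A => (ρ g : Matrix (Fin 2) (Fin 2) k) * A * ((ρ g)⁻¹ : GL (Fin 2) k)
      map_add' := fun A B => by simp [Matrix.add_mul, Matrix.mul_add]
      map_smul' := fun c A => by simp [Matrix.smul_mul, Matrix.mul_smul] }
  map_one' := by ext A <;> simp
  map_mul' g h := by
    ext A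
    simp [_root_.mul_inv_rev, Units.val_mul, mul_assoc]

section ContinuousCohomology
set_option linter.unusedSectionVars false
section ContinuousCohomology

set_option linter.unusedSectionVars false

variable {p : ℕ} (G : Type) [Group G] [TopologicalSpace G]
  (M : Type) [AddCommGroup M] [Module (ZMod p) M] [TopologicalSpace M] [DiscreteTopology M]
  (ρ : Representation (ZMod p) G M)

/-- The differential on continuous inhomogeneous cochains of a topological group with
coefficients in a representation. -/
def dmap (n : ℕ) (f : (Fin n → G) → M) : (Fin (n + 1) → G) → M := fun g =>
  ρ (g 0) (f fun i => g i.succ)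
    + ∑ i : Fin n, ((-1 : ZMod p) ^ ((i : ℕ) + 1)) •
        f (fun j => if (j : ℕ) < (i : ℕ) then g j.castSucc
          else if (j : ℕ) = (i : ℕ) then g j.castSucc * g j.succ
          else g j.succ)
    + ((-1 : ZMod p) ^ (n + 1)) • f (fun j => g j.castSucc)

lemma dmap_add (n : ℕ) (f h : (Fin n → G) → M) :
    dmap G M ρ n (f + h) = dmap G M ρ n f + dmap G M ρ n h := by
  funext g
  simp only [dmap, Pi.add_apply, _root_.map_add, smul_add, Finset.sum_add_distrib]
  abel

lemma dmap_smul (n : ℕ) (c : ZMod p) (f : (Fin n → G) → M) :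
    dmap G M ρ n (c • f) = c • dmap G M ρ n f := by
  funext g
  simp only [dmap, Pi.smul_apply, _root_.map_smul, smul_add, smul_comm _ c]
  rw [Finset.smul_sum]

lemma dmap_zero (n : ℕ) : dmap G M ρ n (0 : (Fin n → G) → M) = 0 := by
  funext g; simp [dmap]

/-- The submodule of continuous `n`-cocycles. -/
def cocycles (n : ℕ) : Submodule (ZMod p) ((Fin n → G) → M) where
  carrier := {f | Continuous f ∧ dmap G M ρ n f = 0}
  add_mem' := fun {f h} hf hh =>
    ⟨hf.1.add hh.1, by rw [dmap_add, hf.2, hh.2, add_zero]⟩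
  zero_mem' := ⟨continuous_const, dmap_zero G M ρ n⟩
  smul_mem' := fun c f hf =>
    ⟨(continuous_of_discreteTopology (α := M)).comp hf.1,
      by rw [dmap_smul, hf.2, smul_zero]⟩

/-- The submodule of continuous `n`-coboundaries (zero in degree 0). -/
def coboundaries : (n : ℕ) → Submodule (ZMod p) ((Fin n → G) → M)
  | 0 => ⊥
  | (n + 1) =>
    { carrier := {f | ∃ h : (Fin n → G) → M, Continuous h ∧ dmap G M ρ n h = f}
      add_mem' := by
        rintro f f' ⟨h, hc, hd⟩ ⟨h', hc', hd'⟩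
        exact ⟨h + h', hc.add hc', by rw [dmap_add, hd, hd']⟩
      zero_mem' := ⟨0, continuous_const, dmap_zero G M ρ n⟩
      smul_mem' := by
        rintro c f ⟨h, hc, hd⟩
        exact ⟨c • h, (continuous_of_discreteTopology (α := M)).comp hc,
          by rw [dmap_smul, hd]⟩ }

/-- Continuous group cohomology in degree `n`, defined via continuous inhomogeneous cochains:
continuous cocycles modulo coboundaries of continuous cochains. -/
abbrev Hcont (n : ℕ) :=
  cocycles G M ρ n ⧸ ((coboundaries G M ρ n).comap (cocycles G M ρ n).subtype)

end ContinuousCohomology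

end ContinuousCohomology

noncomputable section

/-- The lift of `σ` to `GL₂` of the power series ring `ℛ = ℤ_p⟦X₁,…,Y₄⟧`, via constant power
series. -/
def sigmaRcal (p : ℕ) [Fact p.Prime] (σZ : Equiv.Perm (Fin 3) →* GL (Fin 2) ℤ_[p]) :
    Equiv.Perm (Fin 3) →* GL (Fin 2) (MvPowerSeries (Fin 8) ℤ_[p]) :=
  (Matrix.GeneralLinearGroup.map (MvPowerSeries.C (σ := Fin 8) (R := ℤ_[p]))).comp σZ

/-!
Since `P` acts trivially on `Ad ρ̄` and `|S₃| = 6` is invertible in `𝔽_p`, inflation–restriction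
identifies `H¹(P ⋊ S₃, Ad ρ̄)` with the continuous `S₃`-equivariant homomorphisms `P → M₂(𝔽_p)`.
Such a homomorphism is determined by its values at `X` and `Y`, because its kernel is a closed
subgroup containing every `S₃`-conjugate of `X` and `Y`. Conversely every pair of values occurs:
`P` reduces to `1` modulo the maximal ideal, and on that kernel the matrix of coefficients of a
variable `xᵢ`, read mod `p`, is a continuous homomorphism, equivariant for conjugation by the
constant matrices `σ(a)`; at `X` and `Y` these eight homomorphisms give the eight elementary
matrices.
-/

section Cocycles

variable {p : ℕ} {G : Type} [Group G] {M : Type} [AddCommGroup M] [Module (ZMod p) M]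
  {ρ : Representation (ZMod p) G M}

lemma funext_fin_one {α : Type} (x : Fin 1 → α) : x = fun _ => x 0 :=
  funext fun j => by rw [Subsingleton.elim j 0]

lemma dmap_zero_apply (h : (Fin 0 → G) → M) (g : Fin 1 → G) :
    dmap G M ρ 0 h g = ρ (g 0) (h Fin.elim0) - h Fin.elim0 := by
  simp [dmap, Subsingleton.elim _ (Fin.elim0 : Fin 0 → G), sub_eq_add_neg]

lemma dmap_one_apply (f : (Fin 1 → G) → M) (g : Fin 2 → G) :
    dmap G M ρ 1 f g = ρ (g 0) (f fun _ => g 1) - f (fun _ => g 0 * g 1) + f fun _ => g 0 := by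
  have hmul : (fun j : Fin 1 => if (j : ℕ) < ((0 : Fin 1) : ℕ) then g j.castSucc
      else if (j : ℕ) = ((0 : Fin 1) : ℕ) then g j.castSucc * g j.succ else g j.succ) =
      fun _ => g 0 * g 1 := by
    funext j
    fin_cases j
    rfl
  simp only [dmap, Fin.sum_univ_one]
  rw [hmul, funext_fin_one fun i => g i.succ, funext_fin_one fun j => g j.castSucc]
  simp [sub_eq_add_neg]

variable [TopologicalSpace G] [TopologicalSpace M] [DiscreteTopology M]

lemma mem_cocycles_one_iff {f : (Fin 1 → G) → M} :
    f ∈ cocycles G M ρ 1 ↔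
      Continuous f ∧ ∀ x y, f (fun _ => x * y) = ρ x (f fun _ => y) + f fun _ => x := by
  refine and_congr_right fun _ => ⟨fun h x y => ?_, fun h => funext fun g => ?_⟩
  · have := congrFun h ![x, y]
    rw [dmap_one_apply, Pi.zero_apply, sub_add_eq_add_sub] at this
    exact (sub_eq_zero.mp this).symm
  · rw [dmap_one_apply, h, Pi.zero_apply]
    abel

lemma mem_coboundaries_one_iff {f : (Fin 1 → G) → M} :
    f ∈ coboundaries G M ρ 1 ↔ ∃ m : M, ∀ x, f (fun _ => x) = ρ x m - m := by
  constructor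
  · rintro ⟨h, -, rfl⟩
    exact ⟨h Fin.elim0, fun x => dmap_zero_apply h _⟩
  · rintro ⟨m, hm⟩
    refine ⟨fun _ => m, continuous_const, funext fun g => ?_⟩
    rw [dmap_zero_apply, funext_fin_one g, hm]

end Cocycles

lemma exists_eq_sub_of_card_ne_zero {k H M : Type} [Field k] [Group H] [Fintype H]
    [AddCommGroup M] [Module k M] (ρ : Representation k H M)
    (hcard : (Fintype.card H : k) ≠ 0) {c : H → M} (hc : ∀ a b, c (a * b) = ρ a (c b) + c a) :
    ∃ m : M, ∀ a, c a = ρ a m - m := by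
  set n : k := (Fintype.card H : k)
  set s := ∑ b, c b
  refine ⟨-(n⁻¹ • s), fun a => ?_⟩
  have hs : s - ρ a s = n • c a := by
    refine sub_eq_of_eq_add' ?_
    calc s = ∑ b, c (a * b) := (Equiv.sum_comp (Equiv.mulLeft a) c).symm
      _ = ∑ b, (ρ a (c b) + c a) := by simp only [hc]
      _ = ρ a s + n • c a := by
        rw [Finset.sum_add_distrib, map_sum, Finset.sum_const, Finset.card_univ,
          ← Nat.cast_smul_eq_nsmul k]
  rw [map_neg, map_smul, neg_sub_neg, ← smul_sub, hs, smul_smul, inv_mul_cancel₀ hcard,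
    one_smul]

section SemidirectProduct

open SemidirectProduct

variable {p : ℕ} {N H : Type} [Group N] [Group H] [TopologicalSpace N] (φ : H →* MulAut N)
  {M : Type} [AddCommGroup M] [Module (ZMod p) M] [TopologicalSpace M] [DiscreteTopology M]
  (ρ : Representation (ZMod p) H M)

def equivariantHoms : Submodule (ZMod p) (N → M) where
  carrier := {c | Continuous c ∧ (∀ x y, c (x * y) = c x + c y) ∧ ∀ a x, c (φ a x) = ρ a (c x)}
  add_mem' := fun ⟨hc, hmul, heq⟩ ⟨hc', hmul', heq'⟩ =>
    ⟨hc.add hc', fun x y => by simp only [Pi.add_apply, hmul, hmul']; abel,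
      fun a x => by simp only [Pi.add_apply, heq, heq', map_add]⟩
  zero_mem' := ⟨continuous_const, fun _ _ => (add_zero 0).symm, fun _ _ => (map_zero _).symm⟩
  smul_mem' r c := fun ⟨hc, hmul, heq⟩ =>
    ⟨(continuous_of_discreteTopology (f := fun m : M => r • m)).comp hc,
      fun x y => by simp only [Pi.smul_apply, hmul, smul_add],
      fun a x => by simp only [Pi.smul_apply, heq, map_smul]⟩

lemma mem_equivariantHoms {c : N → M} :
    c ∈ equivariantHoms φ ρ ↔
      Continuous c ∧ (∀ x y, c (x * y) = c x + c y) ∧ ∀ a x, c (φ a x) = ρ a (c x) :=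
  Iff.rfl

def evalPair (x y : N) : equivariantHoms φ ρ →ₗ[ZMod p] M × M where
  toFun c := (c.1 x, c.1 y)
  map_add' _ _ := rfl
  map_smul' _ _ := rfl

variable [TopologicalSpace H]

lemma SemidirectProduct.continuous_left : Continuous fun x : N ⋊[φ] H => x.left :=
  (show Continuous fun x : N ⋊[φ] H => (x.left, x.right) from continuous_induced_dom).fst

lemma SemidirectProduct.continuous_inl : Continuous (inl : N → N ⋊[φ] H) :=
  continuous_induced_rng.mpr (continuous_id.prodMk continuous_const)

lemma comp_inl_mem_equivariantHoms {f : (Fin 1 → N ⋊[φ] H) → M}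
    (hf : f ∈ cocycles (N ⋊[φ] H) M (ρ.comp (rightHom (φ := φ))) 1) :
    (fun n => f fun _ => inl n) ∈ equivariantHoms φ ρ := by
  obtain ⟨hcont, hcoc⟩ := mem_cocycles_one_iff.mp hf
  have hinl : ∀ (n : N) (m : M), ρ.comp (rightHom (φ := φ)) (inl n) m = m := by simp
  refine (mem_equivariantHoms φ ρ).mpr
    ⟨hcont.comp (continuous_pi fun _ => continuous_inl φ), fun x y => ?_, fun a x => ?_⟩
  · rw [inl.map_mul, hcoc, hinl, add_comm]
  · have hswap : inl (φ a x) * inr a = (inr a * inl x : N ⋊[φ] H) := by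
      rw [inl_aut, map_inv, inv_mul_cancel_right]
    have := congrArg f (funext fun _ => hswap)
    rw [hcoc, hcoc, hinl, add_comm] at this
    simpa using this

def restrictInl :
    cocycles (N ⋊[φ] H) M (ρ.comp (rightHom (φ := φ))) 1 →ₗ[ZMod p] equivariantHoms φ ρ where
  toFun f := ⟨_, comp_inl_mem_equivariantHoms φ ρ f.2⟩
  map_add' _ _ := rfl
  map_smul' _ _ := rfl

lemma restrictInl_surjective : Function.Surjective (restrictInl φ ρ) := by
  rintro ⟨c, hc⟩
  obtain ⟨hcont, hmul, heq⟩ := (mem_equivariantHoms φ ρ).mp hc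
  have hf : (fun g : Fin 1 → N ⋊[φ] H => c (g 0).left) ∈
      cocycles (N ⋊[φ] H) M (ρ.comp (rightHom (φ := φ))) 1 := by
    refine mem_cocycles_one_iff.mpr
      ⟨hcont.comp ((continuous_left φ).comp (continuous_apply 0)), fun x y => ?_⟩
    simp only [mul_left, hmul, heq, MonoidHom.comp_apply, rightHom_eq_right]
    exact add_comm _ _
  exact ⟨⟨_, hf⟩, rfl⟩

lemma ker_restrictInl [Fact p.Prime] [Fintype H] (hcard : (Fintype.card H : ZMod p) ≠ 0) :
    LinearMap.ker (restrictInl φ ρ) =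
      (coboundaries (N ⋊[φ] H) M (ρ.comp (rightHom (φ := φ))) 1).comap
        (cocycles (N ⋊[φ] H) M (ρ.comp (rightHom (φ := φ))) 1).subtype := by
  ext ⟨f, hf⟩
  obtain ⟨-, hcoc⟩ := mem_cocycles_one_iff.mp hf
  simp only [LinearMap.mem_ker, Submodule.mem_comap, Submodule.subtype_apply,
    mem_coboundaries_one_iff]
  constructor
  · intro h0
    have hN : ∀ n, f (fun _ => inl n) = 0 := fun n => congrFun (congrArg Subtype.val h0) n
    obtain ⟨m, hm⟩ := exists_eq_sub_of_card_ne_zero ρ hcard (c := fun a => f fun _ => inr a)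
      fun a b => by simpa using hcoc (inr a) (inr b)
    refine ⟨m, fun x => ?_⟩
    rw [← inl_left_mul_inr_right x, hcoc, hN, add_zero, hm]
    simp
  · rintro ⟨m, hm⟩
    refine Subtype.ext (funext fun n => ?_)
    simp [restrictInl, hm]

def hcontOneEquivEquivariantHoms [Fact p.Prime] [Fintype H]
    (hcard : (Fintype.card H : ZMod p) ≠ 0) :
    Hcont (N ⋊[φ] H) M (ρ.comp (rightHom (φ := φ))) 1 ≃ₗ[ZMod p] equivariantHoms φ ρ :=
  (Submodule.quotEquivOfEq _ _ (ker_restrictInl φ ρ hcard).symm).trans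
    ((restrictInl φ ρ).quotKerEquivOfSurjective (restrictInl_surjective φ ρ))

end SemidirectProduct

section TopologicalGeneration

variable {G : Type} [Group G] [TopologicalSpace G] [IsTopologicalGroup G] {S : Set G}
  {P : Subgroup G}

lemma mem_of_eq_topologicalClosure (hP : P = (Subgroup.closure S).topologicalClosure) {s : G}
    (hs : s ∈ S) : s ∈ P :=
  hP ▸ Subgroup.le_topologicalClosure _ (Subgroup.subset_closure hs)

lemma le_of_eq_topologicalClosure (hP : P = (Subgroup.closure S).topologicalClosure)
    {K : Subgroup G} (hK : IsClosed (K : Set G)) (hS : S ⊆ K) : P ≤ K :=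
  hP ▸ Subgroup.topologicalClosure_minimal _ ((Subgroup.closure_le K).mpr hS) hK

lemma eq_zero_of_eq_topologicalClosure {M : Type} [AddGroup M] [TopologicalSpace M]
    [DiscreteTopology M] (hP : P = (Subgroup.closure S).topologicalClosure) {c : P → M}
    (hcont : Continuous c) (hmul : ∀ x y, c (x * y) = c x + c y)
    (hS : ∀ x : P, (x : G) ∈ S → c x = 0) : c = 0 := by
  let K : Subgroup P :=
    (MonoidHom.mk' (fun x => Multiplicative.ofAdd (c x)) fun x y => by rw [hmul]; rfl).ker
  have hK : IsClosed (K.map P.subtype : Set G) := by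
    have hPc : IsClosed (P : Set G) := hP ▸ Subgroup.isClosed_topologicalClosure _
    exact hPc.isClosedEmbedding_subtypeVal.isClosedMap _
      ((isClosed_discrete {0}).preimage hcont)
  have hPK := le_of_eq_topologicalClosure hP hK fun s hs =>
    ⟨⟨s, mem_of_eq_topologicalClosure hP hs⟩, hS _ hs, rfl⟩
  funext x
  obtain ⟨y, hy, hyx⟩ := hPK x.2
  rw [show x = y from Subtype.ext hyx.symm]
  exact hy

end TopologicalGeneration

lemma AddMonoidHom.continuous_of_forall_mem_eq_zero {A B : Type*} [AddGroup A]
    [TopologicalSpace A] [IsTopologicalAddGroup A] [AddGroup B] [TopologicalSpace B]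
    [DiscreteTopology B] (f : A →+ B) {U : Set A} (hU : IsOpen U) (h0 : (0 : A) ∈ U)
    (hf : ∀ x ∈ U, f x = 0) : Continuous f :=
  continuous_of_tendsto_nhds_zero f <| by
    rw [nhds_discrete B, Filter.tendsto_pure]
    exact Filter.eventually_of_mem (hU.mem_nhds h0) hf

lemma Matrix.map_mul_of_leibniz {n R k : Type*} [Fintype n] [CommRing R] [CommRing k]
    (D : R →+ k) (π : R →+* k) (hD : ∀ a b, D (a * b) = π a * D b + D a * π b)
    (A B : Matrix n n R) : (A * B).map D = A.map π * B.map D + A.map D * B.map π := by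
  ext j l
  simp [Matrix.mul_apply, hD, Finset.sum_add_distrib]

lemma Matrix.of_X_fin_two {σ R : Type*} [CommSemiring R] (a b c d : σ) :
    Matrix.of ![![(MvPowerSeries.X a : MvPowerSeries σ R), MvPowerSeries.X b],
        ![MvPowerSeries.X c, MvPowerSeries.X d]] =
      Matrix.of fun j l => MvPowerSeries.X (![![a, b], ![c, d]] j l) := by
  ext j l
  fin_cases j <;> fin_cases l <;> rfl

namespace MvPowerSeries

variable (p : ℕ) [Fact p.Prime] {σ : Type*}

def constantCoeffMod : MvPowerSeries σ ℤ_[p] →+* ZMod p :=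
  PadicInt.toZMod.comp constantCoeff

def linearCoeffMod (i : σ) : MvPowerSeries σ ℤ_[p] →+ ZMod p :=
  PadicInt.toZMod.toAddMonoidHom.comp (coeff (Finsupp.single i 1)).toAddMonoidHom

lemma coeff_single_one_mul {R : Type*} [CommSemiring R] (i : σ) (f g : MvPowerSeries σ R) :
    coeff (Finsupp.single i 1) (f * g) =
      constantCoeff f * coeff (Finsupp.single i 1) g +
        coeff (Finsupp.single i 1) f * constantCoeff g := by
  classical
  rw [coeff_mul, Finsupp.antidiagonal_single, Finset.sum_map,
    show Finset.HasAntidiagonal.antidiagonal (1 : ℕ) = {(0, 1), (1, 0)} from by decide,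
    Finset.sum_pair (by decide)]
  simp [coeff_zero_eq_constantCoeff]

lemma linearCoeffMod_mul (i : σ) (f g : MvPowerSeries σ ℤ_[p]) :
    linearCoeffMod p i (f * g) =
      constantCoeffMod p f * linearCoeffMod p i g +
        linearCoeffMod p i f * constantCoeffMod p g := by
  simp [linearCoeffMod, constantCoeffMod, coeff_single_one_mul]

@[simp]
lemma constantCoeffMod_C (c : ℤ_[p]) :
    constantCoeffMod p (C c : MvPowerSeries σ ℤ_[p]) = PadicInt.toZMod c := by
  simp [constantCoeffMod]

@[simp]
lemma linearCoeffMod_C (i : σ) (c : ℤ_[p]) : linearCoeffMod p i (C c) = 0 := by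
  classical
  simp [linearCoeffMod, coeff_C, Finsupp.single_eq_zero]

@[simp]
lemma linearCoeffMod_one (i : σ) : linearCoeffMod p i 1 = 0 := by
  simpa using linearCoeffMod_C p i 1

@[simp]
lemma constantCoeffMod_X (i : σ) : constantCoeffMod p (X i : MvPowerSeries σ ℤ_[p]) = 0 := by
  simp [constantCoeffMod]

@[simp]
lemma linearCoeffMod_X [DecidableEq σ] (i j : σ) :
    linearCoeffMod p i (X j : MvPowerSeries σ ℤ_[p]) = if j = i then 1 else 0 := by
  split_ifs with h
  · simp [linearCoeffMod, h]
  · simp [linearCoeffMod, coeff_X, Finsupp.single_left_inj one_ne_zero, Ne.symm h]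

lemma constantCoeffMod_eq_zero_of_mem {x : MvPowerSeries σ ℤ_[p]} (hx : x ∈ maximalIdeal _) :
    constantCoeffMod p x = 0 := by
  have : constantCoeff x ∈ maximalIdeal ℤ_[p] := fun h => hx (isUnit_iff_constantCoeff.mpr h)
  rwa [← PadicInt.ker_toZMod] at this

lemma linearCoeffMod_eq_zero_of_mem_sq (i : σ) {x : MvPowerSeries σ ℤ_[p]}
    (hx : x ∈ maximalIdeal _ ^ 2) : linearCoeffMod p i x = 0 := by
  rw [pow_two] at hx
  refine Submodule.mul_induction_on hx (fun f hf g hg => ?_) fun f g hf hg => ?_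
  · rw [linearCoeffMod_mul, constantCoeffMod_eq_zero_of_mem p hf,
      constantCoeffMod_eq_zero_of_mem p hg, zero_mul, mul_zero, add_zero]
  · rw [map_add, hf, hg, add_zero]

variable {n : Type*} [Fintype n] [DecidableEq n]

def linearCoeffMatrix (i : σ) (u : GL n (MvPowerSeries σ ℤ_[p])) : Matrix n n (ZMod p) :=
  (u : Matrix n n (MvPowerSeries σ ℤ_[p])).map (linearCoeffMod p i)

lemma linearCoeffMatrix_mul (i : σ) (u v : GL n (MvPowerSeries σ ℤ_[p])) :
    linearCoeffMatrix p i (u * v) =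
      (GeneralLinearGroup.map (constantCoeffMod p) u : Matrix n n (ZMod p)) *
          linearCoeffMatrix p i v +
        linearCoeffMatrix p i u *
          (GeneralLinearGroup.map (constantCoeffMod p) v : Matrix n n (ZMod p)) :=
  Matrix.map_mul_of_leibniz _ _ (linearCoeffMod_mul p i) _ _

lemma linearCoeffMatrix_mul_of_mem_ker (i : σ) {u v : GL n (MvPowerSeries σ ℤ_[p])}
    (hu : u ∈ (GeneralLinearGroup.map (constantCoeffMod p)).ker)
    (hv : v ∈ (GeneralLinearGroup.map (constantCoeffMod p)).ker) :
    linearCoeffMatrix p i (u * v) = linearCoeffMatrix p i u + linearCoeffMatrix p i v := by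
  rw [linearCoeffMatrix_mul, MonoidHom.mem_ker.mp hu, MonoidHom.mem_ker.mp hv, Units.val_one,
    one_mul, mul_one, add_comm]

lemma linearCoeffMatrix_map_C (i : σ) (s : GL n ℤ_[p]) :
    linearCoeffMatrix p i (GeneralLinearGroup.map C s) = 0 := by
  ext j l
  simp [linearCoeffMatrix]

lemma map_constantCoeffMod_map_C (s : GL n ℤ_[p]) :
    GeneralLinearGroup.map (constantCoeffMod p) (GeneralLinearGroup.map (C (σ := σ)) s) =
      GeneralLinearGroup.map PadicInt.toZMod s := by
  ext j l
  simp

lemma linearCoeffMatrix_conj_map_C (i : σ) (s : GL n ℤ_[p])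
    (u : GL n (MvPowerSeries σ ℤ_[p])) :
    linearCoeffMatrix p i
        (GeneralLinearGroup.map C s * u * (GeneralLinearGroup.map C s)⁻¹) =
      (GeneralLinearGroup.map PadicInt.toZMod s : Matrix n n (ZMod p)) *
        linearCoeffMatrix p i u *
          (((GeneralLinearGroup.map PadicInt.toZMod s)⁻¹ : GL n (ZMod p)) :
            Matrix n n (ZMod p)) := by
  rw [← map_inv, linearCoeffMatrix_mul, linearCoeffMatrix_mul, linearCoeffMatrix_map_C,
    linearCoeffMatrix_map_C, map_mul, map_constantCoeffMod_map_C, map_constantCoeffMod_map_C,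
    map_inv]
  simp [Matrix.mul_assoc]

lemma map_constantCoeffMod_eq_one [DecidableEq σ] (e : n → n → σ)
    {u : GL n (MvPowerSeries σ ℤ_[p])}
    (hu : (u : Matrix n n (MvPowerSeries σ ℤ_[p])) = 1 + Matrix.of fun j l => X (e j l)) :
    u ∈ (GeneralLinearGroup.map (constantCoeffMod p)).ker := by
  refine MonoidHom.mem_ker.mpr (Units.ext ?_)
  ext j l
  simp [hu, Matrix.one_apply, apply_ite]

lemma sum_smul_linearCoeffMatrix [Fintype σ] [DecidableEq σ] (w : σ → ZMod p)
    (e : n → n → σ) {u : GL n (MvPowerSeries σ ℤ_[p])}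
    (hu : (u : Matrix n n (MvPowerSeries σ ℤ_[p])) = 1 + Matrix.of fun j l => X (e j l)) :
    ∑ i, w i • linearCoeffMatrix p i u = Matrix.of fun j l => w (e j l) := by
  ext j l
  simp [linearCoeffMatrix, Matrix.sum_apply, hu, Matrix.one_apply,
    apply_ite (linearCoeffMod p _)]

section Topology

variable [TopologicalSpace (MvPowerSeries σ ℤ_[p])] [IsTopologicalRing (MvPowerSeries σ ℤ_[p])]

lemma continuous_constantCoeffMod (hadic : IsAdic (maximalIdeal (MvPowerSeries σ ℤ_[p]))) :
    Continuous (constantCoeffMod p (σ := σ)) := by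
  have hU := (isAdic_iff.mp hadic).1 1
  rw [pow_one] at hU
  exact (constantCoeffMod p).toAddMonoidHom.continuous_of_forall_mem_eq_zero hU
    (Ideal.zero_mem _) fun _ => constantCoeffMod_eq_zero_of_mem p

lemma continuous_linearCoeffMod (hadic : IsAdic (maximalIdeal (MvPowerSeries σ ℤ_[p])))
    (i : σ) : Continuous (linearCoeffMod p i) :=
  (linearCoeffMod p i).continuous_of_forall_mem_eq_zero ((isAdic_iff.mp hadic).1 2)
    (Ideal.zero_mem _) fun _ => linearCoeffMod_eq_zero_of_mem_sq p i

lemma continuous_linearCoeffMatrix (hadic : IsAdic (maximalIdeal (MvPowerSeries σ ℤ_[p])))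
    (i : σ) : Continuous (linearCoeffMatrix p i (n := n)) :=
  Units.continuous_val.matrix_map (continuous_linearCoeffMod p hadic i)

lemma isClosed_ker_map_constantCoeffMod
    (hadic : IsAdic (maximalIdeal (MvPowerSeries σ ℤ_[p]))) :
    IsClosed (((GeneralLinearGroup.map (n := n) (constantCoeffMod p (σ := σ))).ker :
      Subgroup (GL n (MvPowerSeries σ ℤ_[p]))) : Set (GL n (MvPowerSeries σ ℤ_[p]))) := by
  have : DiscreteTopology (Matrix n n (ZMod p)) :=
    inferInstanceAs (DiscreteTopology (n → n → ZMod p))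
  convert (isClosed_discrete ({1} : Set (Matrix n n (ZMod p)))).preimage
    (Units.continuous_val.matrix_map (continuous_constantCoeffMod p hadic))
  ext u
  simp [Units.ext_iff]

end Topology

end MvPowerSeries

lemma natCast_six_ne_zero {p : ℕ} [hp : Fact p.Prime] (hp2 : p ≠ 2) (hp3 : p ≠ 3) :
    ((6 : ℕ) : ZMod p) ≠ 0 := by
  rw [Ne, ZMod.natCast_eq_zero_iff]
  intro h
  rcases hp.out.dvd_mul.mp (show p ∣ 2 * 3 from h) with h | h
  exacts [hp2 ((Nat.prime_dvd_prime_iff_eq hp.out Nat.prime_two).mp h),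
    hp3 ((Nat.prime_dvd_prime_iff_eq hp.out Nat.prime_three).mp h)]

def sigmaConjugates (p : ℕ) [Fact p.Prime] (σZ : Equiv.Perm (Fin 3) →* GL (Fin 2) ℤ_[p])
    (Xu Yu : GL (Fin 2) (MvPowerSeries (Fin 8) ℤ_[p])) :
    Set (GL (Fin 2) (MvPowerSeries (Fin 8) ℤ_[p])) :=
  {g | ∃ a : Equiv.Perm (Fin 3),
    g = sigmaRcal p σZ a * Xu * (sigmaRcal p σZ a)⁻¹ ∨
    g = sigmaRcal p σZ a * Yu * (sigmaRcal p σZ a)⁻¹}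

section SigmaConjugates

open MvPowerSeries

variable {p : ℕ} [Fact p.Prime] {σZ : Equiv.Perm (Fin 3) →* GL (Fin 2) ℤ_[p]}
  {ρstd : Equiv.Perm (Fin 3) →* GL (Fin 2) (ZMod p)}
  {Xu Yu : GL (Fin 2) (MvPowerSeries (Fin 8) ℤ_[p])}
  [TopologicalSpace (MvPowerSeries (Fin 8) ℤ_[p])]
  [IsTopologicalRing (MvPowerSeries (Fin 8) ℤ_[p])]
  {P : Subgroup (GL (Fin 2) (MvPowerSeries (Fin 8) ℤ_[p]))} {φ : Equiv.Perm (Fin 3) →* MulAut P}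

lemma left_mem_of_eq_topologicalClosure
    (hP : P = (Subgroup.closure (sigmaConjugates p σZ Xu Yu)).topologicalClosure) : Xu ∈ P := by
  simpa using mem_of_eq_topologicalClosure hP ⟨1, Or.inl rfl⟩

lemma right_mem_of_eq_topologicalClosure
    (hP : P = (Subgroup.closure (sigmaConjugates p σZ Xu Yu)).topologicalClosure) : Yu ∈ P := by
  simpa using mem_of_eq_topologicalClosure hP ⟨1, Or.inr rfl⟩

lemma le_ker_map_constantCoeffMod
    (hP : P = (Subgroup.closure (sigmaConjugates p σZ Xu Yu)).topologicalClosure)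
    (hadic : IsAdic (maximalIdeal (MvPowerSeries (Fin 8) ℤ_[p])))
    (hX : Xu ∈ (GeneralLinearGroup.map (constantCoeffMod p)).ker)
    (hY : Yu ∈ (GeneralLinearGroup.map (constantCoeffMod p)).ker) :
    P ≤ (GeneralLinearGroup.map (constantCoeffMod p)).ker := by
  refine le_of_eq_topologicalClosure hP (isClosed_ker_map_constantCoeffMod p hadic) ?_
  rintro g ⟨a, rfl | rfl⟩
  exacts [(MonoidHom.normal_ker _).conj_mem _ hX _, (MonoidHom.normal_ker _).conj_mem _ hY _]

lemma linearCoeffMatrix_mem_equivariantHoms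
    (hadic : IsAdic (maximalIdeal (MvPowerSeries (Fin 8) ℤ_[p])))
    (hσlift : (GeneralLinearGroup.map (PadicInt.toZMod (p := p))).comp σZ = ρstd)
    (hker : P ≤ (GeneralLinearGroup.map (constantCoeffMod p)).ker)
    (hφ : ∀ a (x : P), (φ a x : GL (Fin 2) (MvPowerSeries (Fin 8) ℤ_[p])) =
      sigmaRcal p σZ a * x * (sigmaRcal p σZ a)⁻¹) (i : Fin 8) :
    (fun x : P => linearCoeffMatrix p i (x : GL (Fin 2) (MvPowerSeries (Fin 8) ℤ_[p]))) ∈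
      equivariantHoms φ (adGL ρstd) := by
  refine (mem_equivariantHoms _ _).mpr ⟨(continuous_linearCoeffMatrix p hadic i).comp
    continuous_subtype_val, fun x y => linearCoeffMatrix_mul_of_mem_ker p i (hker x.2) (hker y.2),
    fun a x => ?_⟩
  rw [hφ, ← hσlift]
  exact linearCoeffMatrix_conj_map_C p i (σZ a) x

lemma eq_zero_of_vanishes_at_generators
    (hP : P = (Subgroup.closure (sigmaConjugates p σZ Xu Yu)).topologicalClosure)
    (hφ : ∀ a (x : P), (φ a x : GL (Fin 2) (MvPowerSeries (Fin 8) ℤ_[p])) =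
      sigmaRcal p σZ a * x * (sigmaRcal p σZ a)⁻¹)
    {c : P → Matrix (Fin 2) (Fin 2) (ZMod p)} (hc : c ∈ equivariantHoms φ (adGL ρstd))
    (hX : c ⟨Xu, left_mem_of_eq_topologicalClosure hP⟩ = 0)
    (hY : c ⟨Yu, right_mem_of_eq_topologicalClosure hP⟩ = 0) : c = 0 := by
  obtain ⟨hcont, hmul, heq⟩ := (mem_equivariantHoms _ _).mp hc
  refine eq_zero_of_eq_topologicalClosure hP hcont hmul ?_
  rintro x ⟨a, hx | hx⟩
  · rw [Subtype.ext (hx.trans (hφ a ⟨Xu, left_mem_of_eq_topologicalClosure hP⟩).symm), heq, hX,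
      map_zero]
  · rw [Subtype.ext (hx.trans (hφ a ⟨Yu, right_mem_of_eq_topologicalClosure hP⟩).symm), heq, hY,
      map_zero]

lemma finrank_equivariantHoms_eq_eight
    (hP : P = (Subgroup.closure (sigmaConjugates p σZ Xu Yu)).topologicalClosure)
    (hadic : IsAdic (maximalIdeal (MvPowerSeries (Fin 8) ℤ_[p])))
    (hσlift : (GeneralLinearGroup.map (PadicInt.toZMod (p := p))).comp σZ = ρstd)
    (hXu : (Xu : Matrix (Fin 2) (Fin 2) (MvPowerSeries (Fin 8) ℤ_[p])) =
      1 + Matrix.of ![![X 0, X 1], ![X 2, X 3]])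
    (hYu : (Yu : Matrix (Fin 2) (Fin 2) (MvPowerSeries (Fin 8) ℤ_[p])) =
      1 + Matrix.of ![![X 4, X 5], ![X 6, X 7]])
    (hφ : ∀ a (x : P), (φ a x : GL (Fin 2) (MvPowerSeries (Fin 8) ℤ_[p])) =
      sigmaRcal p σZ a * x * (sigmaRcal p σZ a)⁻¹) :
    Module.finrank (ZMod p) (equivariantHoms φ (adGL ρstd)) = 8 := by
  rw [Matrix.of_X_fin_two] at hXu hYu
  have hker := le_ker_map_constantCoeffMod hP hadic (map_constantCoeffMod_eq_one p _ hXu)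
    (map_constantCoeffMod_eq_one p _ hYu)
  let ev := evalPair φ (adGL ρstd) ⟨Xu, left_mem_of_eq_topologicalClosure hP⟩
    ⟨Yu, right_mem_of_eq_topologicalClosure hP⟩
  have hinj : Function.Injective ev :=
    (injective_iff_map_eq_zero ev).mpr fun c hc => Subtype.ext <|
      eq_zero_of_vanishes_at_generators hP hφ c.2 (congrArg Prod.fst hc) (congrArg Prod.snd hc)
  have hsurj : Function.Surjective ev := by
    rintro ⟨A, B⟩
    let w : Fin 8 → ZMod p := ![A 0 0, A 0 1, A 1 0, A 1 1, B 0 0, B 0 1, B 1 0, B 1 1]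
    refine ⟨∑ i, w i • ⟨_, linearCoeffMatrix_mem_equivariantHoms hadic hσlift hker hφ i⟩, ?_⟩
    simp only [ev, evalPair, LinearMap.coe_mk, AddHom.coe_mk, Submodule.coe_sum,
      Submodule.coe_smul, Finset.sum_apply, Pi.smul_apply]
    rw [sum_smul_linearCoeffMatrix p w _ hXu, sum_smul_linearCoeffMatrix p w _ hYu]
    congr 1 <;> ext j l <;> fin_cases j <;> fin_cases l <;> rfl
  rw [(LinearEquiv.ofBijective ev ⟨hinj, hsurj⟩).finrank_eq, Module.finrank_prod,
    Module.finrank_matrix]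
  simp

end SigmaConjugates

theorem stmt_16_general (p : ℕ) [Fact p.Prime] (hp2 : p ≠ 2) (hp3 : p ≠ 3)
    [TopologicalSpace (MvPowerSeries (Fin 8) ℤ_[p])]
    [IsTopologicalRing (MvPowerSeries (Fin 8) ℤ_[p])]
    (hadic : IsAdic (maximalIdeal (MvPowerSeries (Fin 8) ℤ_[p])))
    -- an embedding `σ` of `S₃` into `GL₂(ℤ_p)` lifting the standard residual representation
    (σZ : Equiv.Perm (Fin 3) →* GL (Fin 2) ℤ_[p])
    (ρstd : Equiv.Perm (Fin 3) →* GL (Fin 2) (ZMod p))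
    (hσlift : (Matrix.GeneralLinearGroup.map (PadicInt.toZMod (p := p))).comp σZ = ρstd)
    -- the elements `X = 1 + (Xᵢ)` and `Y = 1 + (Yᵢ)`
    (Xu Yu : GL (Fin 2) (MvPowerSeries (Fin 8) ℤ_[p]))
    (hXu : (Xu : Matrix (Fin 2) (Fin 2) (MvPowerSeries (Fin 8) ℤ_[p])) =
      1 + Matrix.of ![![MvPowerSeries.X 0, MvPowerSeries.X 1],
        ![MvPowerSeries.X 2, MvPowerSeries.X 3]])
    (hYu : (Yu : Matrix (Fin 2) (Fin 2) (MvPowerSeries (Fin 8) ℤ_[p])) =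
      1 + Matrix.of ![![MvPowerSeries.X 4, MvPowerSeries.X 5],
        ![MvPowerSeries.X 6, MvPowerSeries.X 7]])
    -- `P`: the closed subgroup topologically generated by the `S₃`-conjugates of `X` and `Y`
    (P : Subgroup (GL (Fin 2) (MvPowerSeries (Fin 8) ℤ_[p])))
    (hP : P = (Subgroup.closure
      {g | ∃ a : Equiv.Perm (Fin 3),
        g = sigmaRcal p σZ a * Xu * (sigmaRcal p σZ a)⁻¹ ∨
        g = sigmaRcal p σZ a * Yu * (sigmaRcal p σZ a)⁻¹}).topologicalClosure)
    -- the action of `S₃` on `P` by conjugation via `σ`, and `G = P ⋊ S₃`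
    (φ : Equiv.Perm (Fin 3) →* MulAut ↥P)
    (hφ : ∀ (a : Equiv.Perm (Fin 3)) (x : ↥P),
      ((φ a x : ↥P) : GL (Fin 2) (MvPowerSeries (Fin 8) ℤ_[p])) =
        sigmaRcal p σZ a * x * (sigmaRcal p σZ a)⁻¹) :
    Module.finrank (ZMod p)
      (Hcont (↥P ⋊[φ] Equiv.Perm (Fin 3)) (Matrix (Fin 2) (Fin 2) (ZMod p))
        (adGL (ρstd.comp (SemidirectProduct.rightHom (φ := φ)))) 1) = 8 :=
  (hcontOneEquivEquivariantHoms φ (adGL ρstd) (natCast_six_ne_zero hp2 hp3)).finrank_eq.trans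
    (finrank_equivariantHoms_eq_eight hP hadic hσlift hXu hYu hφ)

/-- Let `p ≠ 2, 3` and `G = P ⋊ S₃` the profinite group constructed from the
closed subgroup `P ⊆ Γ(ℤ_p⟦X₁,…,Y₄⟧)` topologically generated by the `S₃`-conjugates of
`X = 1 + (Xᵢ)` and `Y = 1 + (Yᵢ)`, with `ρ̄ : G ↠ S₃ → GL₂(𝔽_p)` the composition of the
projection with the standard representation. Then `dim H¹(G, Ad ρ̄) = 8`. -/
theorem stmt_16 (p : ℕ) [Fact p.Prime] (hp2 : p ≠ 2) (hp3 : p ≠ 3)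
    [TopologicalSpace (MvPowerSeries (Fin 8) ℤ_[p])]
    [IsTopologicalRing (MvPowerSeries (Fin 8) ℤ_[p])]
    (hadic : IsAdic (maximalIdeal (MvPowerSeries (Fin 8) ℤ_[p])))
    -- an embedding `σ` of `S₃` into `GL₂(ℤ_p)` lifting the standard residual representation
    (σZ : Equiv.Perm (Fin 3) →* GL (Fin 2) ℤ_[p]) (hσinj : Function.Injective σZ)
    (ρstd : Equiv.Perm (Fin 3) →* GL (Fin 2) (ZMod p)) (hstdinj : Function.Injective ρstd)
    (hσlift : (Matrix.GeneralLinearGroup.map (PadicInt.toZMod (p := p))).comp σZ = ρstd)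
    -- the elements `X = 1 + (Xᵢ)` and `Y = 1 + (Yᵢ)`
    (Xu Yu : GL (Fin 2) (MvPowerSeries (Fin 8) ℤ_[p]))
    (hXu : (Xu : Matrix (Fin 2) (Fin 2) (MvPowerSeries (Fin 8) ℤ_[p])) =
      1 + Matrix.of ![![MvPowerSeries.X 0, MvPowerSeries.X 1],
        ![MvPowerSeries.X 2, MvPowerSeries.X 3]])
    (hYu : (Yu : Matrix (Fin 2) (Fin 2) (MvPowerSeries (Fin 8) ℤ_[p])) =
      1 + Matrix.of ![![MvPowerSeries.X 4, MvPowerSeries.X 5],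
        ![MvPowerSeries.X 6, MvPowerSeries.X 7]])
    -- `P`: the closed subgroup topologically generated by the `S₃`-conjugates of `X` and `Y`
    (P : Subgroup (GL (Fin 2) (MvPowerSeries (Fin 8) ℤ_[p])))
    (hP : P = (Subgroup.closure
      {g | ∃ a : Equiv.Perm (Fin 3),
        g = sigmaRcal p σZ a * Xu * (sigmaRcal p σZ a)⁻¹ ∨
        g = sigmaRcal p σZ a * Yu * (sigmaRcal p σZ a)⁻¹}).topologicalClosure)
    -- the action of `S₃` on `P` by conjugation via `σ`, and `G = P ⋊ S₃`
    (φ : Equiv.Perm (Fin 3) →* MulAut ↥P)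
    (hφ : ∀ (a : Equiv.Perm (Fin 3)) (x : ↥P),
      ((φ a x : ↥P) : GL (Fin 2) (MvPowerSeries (Fin 8) ℤ_[p])) =
        sigmaRcal p σZ a * x * (sigmaRcal p σZ a)⁻¹) :
    Module.finrank (ZMod p)
      (Hcont (↥P ⋊[φ] Equiv.Perm (Fin 3)) (Matrix (Fin 2) (Fin 2) (ZMod p))
        (adGL (ρstd.comp (SemidirectProduct.rightHom (φ := φ)))) 1) = 8 :=
  stmt_16_general p hp2 hp3 hadic σZ ρstd hσlift Xu Yu hXu hYu P hP φ hφ
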